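/- Let S = {±a_1,…,±a_n} where 0 < a_1 < … < a_n and gcd(a_1,…,a_n) = 1. If either a_i ≡ 1 (mod 3) for all 1 ≤ i ≤ n, or a_i ≡ 2 (mod 3) for all 1 ≤ i ≤ n, then χ(a_1,…,a_n) = 3. -/

import Mathlib

/-- The shift action of `ℤ` on `α^ℤ`: `(s · x)(n) = x(n + s)`. -/
def shift {α : Type*} (s : ℤ) (x : ℤ → α) : ℤ → α := fun n => x (n + s)

/-- The free part `F(2^ℤ)` of the shift action on `2^ℤ = (ℤ → Bool)`. -/
def FreePart : Set (ℤ → Bool) := {x | ∀ s : ℤ, s ≠ 0 → shift s x ≠ x}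

/-- `c` is a Borel proper coloring of the Schreier graph `G_S` on `F(2^ℤ)`,
where `S = {±a : a ∈ A}`: `c` is Borel and `c(x) ≠ c(s · x)` for all `x` and `s ∈ S`. -/
def IsBorelColoring (A : Finset ℕ) {k : ℕ}
    (c : {x : ℤ → Bool // x ∈ FreePart} → Fin k) : Prop :=
  Measurable c ∧
    ∀ (x : {x : ℤ → Bool // x ∈ FreePart}) (a : ℕ), a ∈ A →
      ∀ (h : shift (a : ℤ) x.1 ∈ FreePart), c x ≠ c ⟨shift (a : ℤ) x.1, h⟩

/-- The Borel chromatic number `χ(a₁, …, aₙ)` of the Schreier graph `G_S` on `F(2^ℤ)`,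
where `S = {±a : a ∈ A}`: the least `k` admitting a Borel proper `k`-coloring. -/
noncomputable def borelChromatic (A : Finset ℕ) : ℕ :=
  sInf {k : ℕ | ∃ c : {x : ℤ → Bool // x ∈ FreePart} → Fin k, IsBorelColoring A c}

/-!
A Borel proper 2-colouring `c` is impossible by a Baire category argument. The colour class
`B = c⁻¹(0)` is swapped with its complement by the shift by `a ∈ A`, hence by every odd multiple of
`a`. Being Borel, `B` agrees with an open set `U` up to a meagre set; since the shift is
topologically mixing, some odd multiple of `a` moves `U` to a set meeting `U` in a nonempty open
set, on which `B` would then both hold and fail residually.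

For three colours, a Borel maximal independent set of the graph joining points of an orbit at
distance `< N = 2 max A + 4` (built greedily from a countable cover by independent Borel sets) cuts
every orbit into segments of length `g ≥ N`. The point at distance `p` from the start of its segment
gets colour `p mod 3` before a split point `t` and `p - t mod 3` after it. A step by `a ≡ ρ ≢ 0`
changes the colour by `ρ` or `ρ - t` inside a segment and by `ρ - (g - t)` across a marker, so it
suffices to pick `t ≢ ρ` and `g - t ≢ ρ`, which one of three consecutive values of `t` does.
-/

open Set Filter

section Shift

variable {α : Type*}

lemma shift_shift (s t : ℤ) (x : ℤ → α) : shift t (shift s x) = shift (t + s) x := by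
  funext n
  simp only [shift, add_assoc]

@[simp]
lemma shift_zero (x : ℤ → α) : shift 0 x = x := by
  funext n
  simp [shift]

variable [TopologicalSpace α]

lemma continuous_shift (s : ℤ) : Continuous (shift (α := α) s) :=
  continuous_pi fun n => continuous_apply (n + s)

def shiftHomeomorph (s : ℤ) : (ℤ → α) ≃ₜ (ℤ → α) where
  toFun := shift s
  invFun := shift (-s)
  left_inv x := by simp [shift_shift]
  right_inv x := by simp [shift_shift]
  continuous_toFun := continuous_shift s
  continuous_invFun := continuous_shift (-s)

theorem exists_forall_inter_shift_preimage_nonempty {U : Set (ℤ → α)} (hU : IsOpen U)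
    (hne : U.Nonempty) : ∃ S : ℕ, ∀ s : ℤ, S < s.natAbs → (U ∩ shift s ⁻¹' U).Nonempty := by
  obtain ⟨z, hz⟩ := hne
  obtain ⟨I, u, hu, hIU⟩ := isOpen_pi_iff.1 hU z hz
  refine ⟨2 * I.sup Int.natAbs, fun s hs => ?_⟩
  have hfar : ∀ i ∈ I, i + s ∉ I := fun i hi hi' => by
    have := I.le_sup (f := Int.natAbs) hi
    have := I.le_sup (f := Int.natAbs) hi'
    omega
  refine ⟨fun j => if j ∈ I then z j else z (j - s), hIU fun i (hi : i ∈ I) => ?_,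
    hIU fun i (hi : i ∈ I) => ?_⟩
  · simpa [hi] using (hu i hi).2
  · simpa [shift, hfar i hi] using (hu i hi).2

lemma dense_setOf_shift_ne [Nontrivial α] {s : ℤ} (hs : s ≠ 0) :
    Dense {x : ℤ → α | shift s x ≠ x} := by
  refine dense_iff_inter_open.2 fun U hU ⟨z, hz⟩ => ?_
  obtain ⟨I, u, hu, hIU⟩ := isOpen_pi_iff.1 hU z hz
  obtain ⟨m, hm⟩ := I.exists_notMem
  obtain ⟨b, hb⟩ := exists_ne (z (m + s))
  refine ⟨Function.update z m b, hIU fun i hi => ?_, fun h => hb ?_⟩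
  · rw [Function.update_of_ne (ne_of_mem_of_not_mem hi hm)]
    exact (hu i hi).2
  · simpa [shift, hs] using (congrFun h m).symm

end Shift

lemma freePart_eq_iInter : FreePart = ⋂ (s : ℤ) (_ : s ≠ 0), {x | shift s x ≠ x} := by
  ext x
  simp [FreePart]

lemma isOpen_setOf_shift_ne (s : ℤ) : IsOpen {x : ℤ → Bool | shift s x ≠ x} :=
  isOpen_ne_fun (continuous_shift s) continuous_id

lemma freePart_mem_residual : FreePart ∈ residual (ℤ → Bool) := by
  rw [freePart_eq_iInter]
  exact countable_iInter_mem.2 fun s => countable_iInter_mem.2 fun hs =>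
    residual_of_dense_open (isOpen_setOf_shift_ne s) (dense_setOf_shift_ne hs)

lemma measurableSet_freePart : MeasurableSet FreePart := by
  rw [freePart_eq_iInter]
  exact .iInter fun s => .iInter fun _ => (isOpen_setOf_shift_ne s).measurableSet

lemma shift_mem_freePart {x : ℤ → Bool} (hx : x ∈ FreePart) (k : ℤ) : shift k x ∈ FreePart := by
  intro s hs h
  apply hx s hs
  simpa [shift_shift] using congrArg (shift (-k)) h

def freeShift (s : ℤ) (x : FreePart) : FreePart := ⟨shift s x, shift_mem_freePart x.2 s⟩

@[simp]
lemma coe_freeShift (s : ℤ) (x : FreePart) : (freeShift s x : ℤ → Bool) = shift s x := rfl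

lemma freeShift_freeShift (s t : ℤ) (x : FreePart) :
    freeShift t (freeShift s x) = freeShift (t + s) x :=
  Subtype.ext (shift_shift s t x.1)

@[simp]
lemma freeShift_zero (x : FreePart) : freeShift 0 x = x :=
  Subtype.ext (shift_zero x.1)

lemma freeShift_left_injective (x : FreePart) : Function.Injective (freeShift · x) := by
  intro i j h
  by_contra hij
  apply x.2 (i - j) (sub_ne_zero.2 hij)
  simpa [freeShift_freeShift, sub_eq_add_neg, add_comm] using
    congrArg (fun y => (freeShift (-j) y).1) h

lemma measurable_freeShift (s : ℤ) : Measurable (freeShift s) :=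
  ((continuous_shift s).measurable.comp measurable_subtype_coe).subtype_mk

section Baire

variable {X : Type*} [TopologicalSpace X] [BaireSpace X]

theorem not_eventually_apply_mem_iff_notMem {s u : Set X} (hu : IsOpen u)
    (hsu : s =ᶠ[residual X] u) (f : X ≃ₜ X) (hf : (u ∩ f ⁻¹' u).Nonempty) :
    ¬ ∀ᶠ x in residual X, f x ∈ s ↔ x ∉ s := by
  intro hswap
  have hfsu : f ⁻¹' s =ᶠ[residual X] f ⁻¹' u :=
    hsu.comp_tendsto (tendsto_residual_of_isOpenMap f.continuous f.isOpenMap)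
  refine not_isMeagre_of_isOpen (hu.inter (hu.preimage f.continuous)) hf ?_
  rw [eventuallyEq_set] at hsu hfsu
  filter_upwards [hsu, hfsu, hswap] with x h₁ h₂ h₃ ⟨hxu, hfxu⟩
  exact h₃.1 (h₂.2 hfxu) (h₁.2 hxu)

theorem not_baireMeasurableSet_of_forall_exists_homeomorph [Nonempty X] {s : Set X}
    (h : ∀ u : Set X, IsOpen u → u.Nonempty →
      ∃ f : X ≃ₜ X, (u ∩ f ⁻¹' u).Nonempty ∧ ∀ᶠ x in residual X, f x ∈ s ↔ x ∉ s) :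
    ¬ BaireMeasurableSet s := by
  intro hs
  obtain ⟨u, hu, hsu⟩ := hs.residualEq_isOpen
  rcases u.eq_empty_or_nonempty with rfl | hne
  · obtain ⟨f, hf, hswap⟩ := h univ isOpen_univ univ_nonempty
    refine not_eventually_apply_mem_iff_notMem isOpen_univ (s := sᶜ) ?_ f hf ?_
    · simpa using hsu.compl
    · exact hswap.mono fun x hx => by simp [hx]
  · obtain ⟨f, hf, hswap⟩ := h u hu hne
    exact not_eventually_apply_mem_iff_notMem hu hsu f hf hswap

end Baire

lemma IsBorelColoring.apply_freeShift_mul_eq_iff {A : Finset ℕ} {c : FreePart → Fin 2}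
    (hc : IsBorelColoring A c) {a : ℕ} (ha : a ∈ A) (x : FreePart) (n : ℕ) :
    c (freeShift (n * a) x) = c x ↔ Even n := by
  induction n with
  | zero => simp
  | succ n ih =>
    have hstep : c (freeShift a (freeShift (n * a) x)) ≠ c (freeShift (n * a) x) :=
      (hc.2 _ a ha _).symm
    rw [freeShift_freeShift] at hstep
    have hfin : ∀ u v w : Fin 2, u ≠ v → (u = w ↔ ¬ v = w) := by decide
    rw [show ((n + 1 : ℕ) : ℤ) * a = a + n * a by push_cast; ring, hfin _ _ _ hstep, ih,
      Nat.even_add_one]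

theorem not_isBorelColoring_fin_two {A : Finset ℕ} {a : ℕ} (ha : a ∈ A) (ha0 : a ≠ 0)
    (c : FreePart → Fin 2) : ¬ IsBorelColoring A c := by
  intro hc
  have hB : BaireMeasurableSet (Subtype.val '' (c ⁻¹' {0})) :=
    (measurableSet_freePart.subtype_image (hc.1 (measurableSet_singleton 0))).baireMeasurableSet
  refine not_baireMeasurableSet_of_forall_exists_homeomorph (fun U hU hne => ?_) hB
  obtain ⟨S, hS⟩ := exists_forall_inter_shift_preimage_nonempty hU hne
  refine ⟨shiftHomeomorph (((2 * S + 1 : ℕ) : ℤ) * a), hS _ ?_, ?_⟩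
  · rw [Int.natAbs_mul, Int.natAbs_natCast, Int.natAbs_natCast]
    nlinarith [Nat.pos_of_ne_zero ha0]
  · filter_upwards [freePart_mem_residual] with x hx
    have hne : c (freeShift _ ⟨x, hx⟩) ≠ c ⟨x, hx⟩ :=
      mt (hc.apply_freeShift_mul_eq_iff ha ⟨x, hx⟩ (2 * S + 1)).1 (Nat.not_even_two_mul_add_one S)
    have hfin : ∀ u v : Fin 2, u ≠ v → (u = 0 ↔ ¬ v = 0) := by decide
    change (freeShift _ ⟨x, hx⟩).1 ∈ _ ↔ (⟨x, hx⟩ : FreePart).1 ∉ _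
    rw [Subtype.val_injective.mem_set_image, Subtype.val_injective.mem_set_image]
    exact hfin _ _ hne

namespace SimpleGraph

variable {X : Type*} (G : SimpleGraph X) (C : ℕ → Set X)

def greedyStage : ℕ → Set X
  | 0 => ∅
  | n + 1 => greedyStage n ∪ {x ∈ C n | ∀ y ∈ greedyStage n, ¬ G.Adj x y}

def greedyLayer (n : ℕ) : Set X := {x ∈ C n | ∀ y ∈ G.greedyStage C n, ¬ G.Adj x y}

def greedyIndepSet : Set X := ⋃ n, G.greedyLayer C n

variable {G C}

lemma greedyLayer_subset_greedyStage {m n : ℕ} (h : m < n) :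
    G.greedyLayer C m ⊆ G.greedyStage C n :=
  subset_union_right.trans <|
    monotone_nat_of_le_succ (fun _ => subset_union_left) (f := G.greedyStage C) h

lemma greedyStage_subset_greedyIndepSet (n : ℕ) : G.greedyStage C n ⊆ G.greedyIndepSet C := by
  induction n with
  | zero => exact empty_subset _
  | succ n ih => exact union_subset ih (subset_iUnion (G.greedyLayer C) n)

lemma isIndepSet_greedyIndepSet (hC : ∀ n, G.IsIndepSet (C n)) :
    G.IsIndepSet (G.greedyIndepSet C) := by
  intro x hx y hy hxy hadj
  obtain ⟨i, hx⟩ := mem_iUnion.1 hx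
  obtain ⟨j, hy⟩ := mem_iUnion.1 hy
  rcases lt_trichotomy i j with h | rfl | h
  · exact hy.2 x (greedyLayer_subset_greedyStage h hx) hadj.symm
  · exact hC i hx.1 hy.1 hxy hadj
  · exact hx.2 y (greedyLayer_subset_greedyStage h hy) hadj

lemma exists_adj_mem_greedyIndepSet (hC : ∀ x, ∃ n, x ∈ C n) {x : X}
    (hx : x ∉ G.greedyIndepSet C) : ∃ y ∈ G.greedyIndepSet C, G.Adj x y := by
  obtain ⟨n, hn⟩ := hC x
  by_contra! h
  exact hx (mem_iUnion.2 ⟨n, hn, fun y hy => h y (greedyStage_subset_greedyIndepSet n hy)⟩)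

variable [MeasurableSpace X]

lemma measurableSet_setOf_forall_not_adj
    (hG : ∀ s, MeasurableSet s → MeasurableSet {x | ∃ y ∈ s, G.Adj x y})
    {s t : Set X} (hs : MeasurableSet s) (ht : MeasurableSet t) :
    MeasurableSet {x ∈ t | ∀ y ∈ s, ¬ G.Adj x y} := by
  convert ht.diff (hG s hs) using 1
  ext x
  simp

lemma measurableSet_greedyIndepSet (hC : ∀ n, MeasurableSet (C n))
    (hG : ∀ s, MeasurableSet s → MeasurableSet {x | ∃ y ∈ s, G.Adj x y}) :
    MeasurableSet (G.greedyIndepSet C) := by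
  have hstage : ∀ n, MeasurableSet (G.greedyStage C n) := by
    intro n
    induction n with
    | zero => exact .empty
    | succ n ih => exact ih.union (measurableSet_setOf_forall_not_adj hG ih (hC n))
  exact .iUnion fun n => measurableSet_setOf_forall_not_adj hG (hstage n) (hC n)

theorem exists_measurableSet_isIndepSet_forall_exists_adj [TopologicalSpace X]
    [SecondCountableTopology X] [T1Space X] [OpensMeasurableSpace X]
    (hfin : ∀ x, (G.neighborSet x).Finite)
    (hG : ∀ s, MeasurableSet s → MeasurableSet {x | ∃ y ∈ s, G.Adj x y}) :
    ∃ M, MeasurableSet M ∧ G.IsIndepSet M ∧ ∀ x ∉ M, ∃ y ∈ M, G.Adj x y := by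
  obtain ⟨b, hb⟩ := TopologicalSpace.exists_seq_basis X
  set C : ℕ → Set X := fun n => {x ∈ b n | ∀ y ∈ b n, ¬ G.Adj x y}
  have hcover : ∀ x, ∃ n, x ∈ C n := by
    intro x
    obtain ⟨_, ⟨n, rfl⟩, hxn, hsub⟩ := hb.exists_subset_of_mem_open
      (G.notMem_neighborSet_self (a := x)) (hfin x).isClosed.isOpen_compl
    exact ⟨n, hxn, fun y hy => hsub hy⟩
  refine ⟨G.greedyIndepSet C, measurableSet_greedyIndepSet (fun n => ?_) hG,
    isIndepSet_greedyIndepSet fun n x hx y hy _ => hx.2 y hy.1,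
    fun x => exists_adj_mem_greedyIndepSet hcover⟩
  have hbn : MeasurableSet (b n) := (hb.isOpen (mem_range_self n)).measurableSet
  exact measurableSet_setOf_forall_not_adj hG hbn hbn

end SimpleGraph

def shiftGraph (N : ℕ) : SimpleGraph FreePart where
  Adj x y := ∃ j : ℤ, j ≠ 0 ∧ j.natAbs < N ∧ freeShift j x = y
  symm := ⟨by
    rintro x _ ⟨j, hj, hjN, rfl⟩
    exact ⟨-j, neg_ne_zero.2 hj, by rwa [Int.natAbs_neg], by simp [freeShift_freeShift]⟩⟩
  loopless := ⟨fun x ⟨j, hj, _, h⟩ => x.2 j hj (congrArg Subtype.val h)⟩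

lemma finite_neighborSet_shiftGraph (N : ℕ) (x : FreePart) :
    ((shiftGraph N).neighborSet x).Finite := by
  refine ((finite_Ioo (-(N : ℤ)) N).image (freeShift · x)).subset ?_
  rintro y ⟨j, -, hjN, rfl⟩
  exact ⟨j, by simp only [mem_Ioo]; omega, rfl⟩

lemma measurableSet_exists_adj_shiftGraph (N : ℕ) {s : Set FreePart} (hs : MeasurableSet s) :
    MeasurableSet {x | ∃ y ∈ s, (shiftGraph N).Adj x y} := by
  convert MeasurableSet.iUnion fun j : ℤ =>
    MeasurableSet.iUnion fun (_ : j ≠ 0 ∧ j.natAbs < N) => measurable_freeShift j hs using 1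
  ext x
  simp only [shiftGraph, mem_iUnion, mem_preimage]
  constructor
  · rintro ⟨_, hy, j, hj, hjN, rfl⟩
    exact ⟨j, ⟨hj, hjN⟩, hy⟩
  · rintro ⟨j, ⟨hj, hjN⟩, hy⟩
    exact ⟨_, hy, j, hj, hjN, rfl⟩

section Segments

noncomputable def prevDist (Z : Set ℤ) (k : ℤ) : ℕ := sInf {n : ℕ | k - n ∈ Z}

noncomputable def nextDist (Z : Set ℤ) (k : ℤ) : ℕ := sInf {n : ℕ | 0 < n ∧ k + n ∈ Z}

variable {Z : Set ℤ}

lemma sub_notMem_of_lt_prevDist {k : ℤ} {n : ℕ} (h : n < prevDist Z k) : k - n ∉ Z :=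
  Nat.notMem_of_lt_sInf h

lemma add_notMem_of_lt_nextDist {k : ℤ} {n : ℕ} (hn : 0 < n) (h : n < nextDist Z k) :
    k + n ∉ Z :=
  fun hmem => Nat.notMem_of_lt_sInf h ⟨hn, hmem⟩

lemma prevDist_eq {k : ℤ} {p : ℕ} (hp : k - p ∈ Z) (hlt : ∀ n < p, k - n ∉ Z) :
    prevDist Z k = p :=
  le_antisymm (Nat.sInf_le hp)
    (not_lt.1 fun h => hlt _ h (Nat.sInf_mem (s := {n : ℕ | k - n ∈ Z}) ⟨p, hp⟩))

lemma nextDist_eq {k : ℤ} {q : ℕ} (hq0 : 0 < q) (hq : k + q ∈ Z)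
    (hlt : ∀ n, 0 < n → n < q → k + n ∉ Z) : nextDist Z k = q := by
  refine le_antisymm (Nat.sInf_le ⟨hq0, hq⟩) (not_lt.1 fun h => ?_)
  obtain ⟨hpos, hmem⟩ := Nat.sInf_mem (⟨q, hq0, hq⟩ : {n : ℕ | 0 < n ∧ k + n ∈ Z}.Nonempty)
  exact hlt _ hpos h hmem

lemma prevDist_preimage_add (Z : Set ℤ) (a k : ℤ) :
    prevDist ((· + a) ⁻¹' Z) k = prevDist Z (k + a) := by
  simp only [prevDist, mem_preimage, sub_add_eq_add_sub]

lemma nextDist_preimage_add (Z : Set ℤ) (a k : ℤ) :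
    nextDist ((· + a) ⁻¹' Z) k = nextDist Z (k + a) := by
  simp only [nextDist, mem_preimage, add_right_comm]

structure IsMarkerSet (N : ℕ) (Z : Set ℤ) : Prop where
  separated : Z.Pairwise fun i j => N ≤ (i - j).natAbs
  syndetic : ∀ k, ∃ i ∈ Z, (i - k).natAbs < N

namespace IsMarkerSet

variable {N : ℕ}

lemma exists_sub_mem (hZ : IsMarkerSet N Z) (k : ℤ) : ∃ n : ℕ, k - n ∈ Z := by
  obtain ⟨i, hi, hik⟩ := hZ.syndetic (k - N)
  exact ⟨(k - i).toNat, by rwa [Int.toNat_of_nonneg (by omega), sub_sub_cancel]⟩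

lemma exists_add_mem (hZ : IsMarkerSet N Z) (k : ℤ) : ∃ n : ℕ, 0 < n ∧ k + n ∈ Z := by
  obtain ⟨i, hi, hik⟩ := hZ.syndetic (k + N)
  exact ⟨(i - k).toNat, by omega, by rwa [Int.toNat_of_nonneg (by omega), add_sub_cancel]⟩

lemma sub_prevDist_mem (hZ : IsMarkerSet N Z) (k : ℤ) : k - prevDist Z k ∈ Z :=
  Nat.sInf_mem (hZ.exists_sub_mem k)

lemma add_nextDist_mem (hZ : IsMarkerSet N Z) (k : ℤ) : k + nextDist Z k ∈ Z :=
  (Nat.sInf_mem (hZ.exists_add_mem k)).2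

lemma nextDist_pos (hZ : IsMarkerSet N Z) (k : ℤ) : 0 < nextDist Z k :=
  (Nat.sInf_mem (hZ.exists_add_mem k)).1

lemma le_prevDist_add_nextDist (hZ : IsMarkerSet N Z) (k : ℤ) :
    N ≤ prevDist Z k + nextDist Z k := by
  have := hZ.separated (hZ.add_nextDist_mem k) (hZ.sub_prevDist_mem k)
    (by have := hZ.nextDist_pos k; omega)
  omega

lemma prevDist_add_of_lt_nextDist (hZ : IsMarkerSet N Z) {k : ℤ} {a : ℕ}
    (ha : a < nextDist Z k) : prevDist Z (k + a) = prevDist Z k + a := by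
  refine prevDist_eq (by simpa using hZ.sub_prevDist_mem k) fun n hn => ?_
  rcases lt_or_ge n a with h | h
  · simpa [add_sub_assoc, ← Nat.cast_sub h.le] using
      add_notMem_of_lt_nextDist (Nat.sub_pos_of_lt h) (by omega)
  · simpa [Nat.cast_sub h, sub_sub_eq_add_sub, add_comm] using
      sub_notMem_of_lt_prevDist (Z := Z) (k := k) (n := n - a) (by omega)

lemma nextDist_add_of_lt_nextDist (hZ : IsMarkerSet N Z) {k : ℤ} {a : ℕ}
    (ha : a < nextDist Z k) : nextDist Z (k + a) = nextDist Z k - a := by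
  have hq : k + a + ↑(nextDist Z k - a) ∈ Z := by
    simpa [Nat.cast_sub ha.le, add_assoc] using hZ.add_nextDist_mem k
  refine nextDist_eq (Nat.sub_pos_of_lt ha) hq fun n hn hlt => ?_
  simpa [add_assoc] using add_notMem_of_lt_nextDist (Z := Z) (k := k) (n := a + n) (by omega)
    (by omega)

lemma prevDist_add_of_nextDist_le (hZ : IsMarkerSet N Z) {k : ℤ} {a : ℕ}
    (ha : nextDist Z k ≤ a) (haN : a < N) : prevDist Z (k + a) = a - nextDist Z k := by
  have hq := hZ.add_nextDist_mem k
  refine prevDist_eq (by convert hq using 1; push_cast [ha]; ring) fun n hn hmem => ?_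
  have := hZ.separated hmem hq (by omega)
  omega

end IsMarkerSet

end Segments

noncomputable def splitPoint (m : ℕ) (ρ : ZMod 3) (g : ℕ) : ℕ :=
  sInf {t | m < t ∧ t + m < g ∧ (t : ZMod 3) ≠ ρ ∧ (g : ZMod 3) - t ≠ ρ}

lemma splitPoint_spec {m g : ℕ} (ρ : ZMod 3) (hg : 2 * m + 4 ≤ g) :
    m < splitPoint m ρ g ∧ splitPoint m ρ g + m < g ∧
      (splitPoint m ρ g : ZMod 3) ≠ ρ ∧ (g : ZMod 3) - splitPoint m ρ g ≠ ρ := by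
  have hres : ∀ u v : ZMod 3, ∃ i : Fin 3, u + (i : ℕ) ≠ ρ ∧ v - (u + (i : ℕ)) ≠ ρ := by
    revert ρ
    decide
  obtain ⟨i, hi⟩ := hres (m + 1 : ℕ) g
  exact Nat.sInf_mem (s := {t | m < t ∧ t + m < g ∧ (t : ZMod 3) ≠ ρ ∧ (g : ZMod 3) - t ≠ ρ})
    ⟨m + 1 + i, by omega, by omega, by simpa using hi⟩

def segmentColour (t p : ℕ) : ZMod 3 := if p < t then p else p - t

lemma segmentColour_add_ne {t p a : ℕ} {ρ : ZMod 3} (hρ : ρ ≠ 0) (ha : (a : ZMod 3) = ρ)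
    (ht : (t : ZMod 3) ≠ ρ) : segmentColour t (p + a) ≠ segmentColour t p := by
  unfold segmentColour
  split_ifs with h₁ h₂ h₂ <;> intro h <;> push_cast at h
  · exact hρ (by linear_combination ha.symm + h)
  · omega
  · exact ht (by linear_combination ha - h)
  · exact hρ (by linear_combination ha.symm + h)

lemma segmentColour_sub_ne {t t' p q a : ℕ} {ρ : ZMod 3} (ha : (a : ZMod 3) = ρ)
    (hqa : q ≤ a) (hat' : a < t') (htp : t + a < p + q) (ht : ((p + q : ℕ) : ZMod 3) - t ≠ ρ) :
    segmentColour t' (a - q) ≠ segmentColour t p := by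
  unfold segmentColour
  rw [if_pos (by omega), if_neg (by omega)]
  intro h
  push_cast [hqa] at h ht
  exact ht (by linear_combination ha - h)

noncomputable def markerColour (m : ℕ) (ρ : ZMod 3) (Z : Set ℤ) (k : ℤ) : ZMod 3 :=
  segmentColour (splitPoint m ρ (prevDist Z k + nextDist Z k)) (prevDist Z k)

lemma markerColour_preimage_add (m : ℕ) (ρ : ZMod 3) (Z : Set ℤ) (a k : ℤ) :
    markerColour m ρ ((· + a) ⁻¹' Z) k = markerColour m ρ Z (k + a) := by
  simp only [markerColour, prevDist_preimage_add, nextDist_preimage_add]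

theorem IsMarkerSet.markerColour_add_ne {N : ℕ} {Z : Set ℤ} (hZ : IsMarkerSet N Z) {m a : ℕ}
    (hN : 2 * m + 4 ≤ N) (ham : a ≤ m) {ρ : ZMod 3} (hρ : ρ ≠ 0) (ha : (a : ZMod 3) = ρ)
    (k : ℤ) : markerColour m ρ Z (k + a) ≠ markerColour m ρ Z k := by
  have ha0 : 0 < a := Nat.pos_of_ne_zero fun h => hρ (by simp [← ha, h])
  have hg := hZ.le_prevDist_add_nextDist k
  obtain ⟨ht₁, ht₂, ht₃, ht₄⟩ := splitPoint_spec ρ (hN.trans hg)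
  unfold markerColour
  rcases lt_or_ge a (nextDist Z k) with hq | hq
  · rw [hZ.prevDist_add_of_lt_nextDist hq, hZ.nextDist_add_of_lt_nextDist hq,
      show prevDist Z k + a + (nextDist Z k - a) = prevDist Z k + nextDist Z k by omega]
    exact segmentColour_add_ne hρ ha ht₃
  · have hg' := hZ.le_prevDist_add_nextDist (k + a)
    rw [hZ.prevDist_add_of_nextDist_le hq (by omega)] at hg' ⊢
    exact segmentColour_sub_ne ha hq (ham.trans_lt (splitPoint_spec ρ (hN.trans hg')).1)
      (by omega) ht₄

def markerTimes (M : Set FreePart) (x : FreePart) : Set ℤ := {k | freeShift k x ∈ M}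

lemma markerTimes_freeShift (M : Set FreePart) (a : ℤ) (x : FreePart) :
    markerTimes M (freeShift a x) = (· + a) ⁻¹' markerTimes M x := by
  ext k
  simp [markerTimes, freeShift_freeShift]

lemma isMarkerSet_markerTimes {N : ℕ} (hN : 0 < N) {M : Set FreePart}
    (hindep : (shiftGraph N).IsIndepSet M) (hmax : ∀ x ∉ M, ∃ y ∈ M, (shiftGraph N).Adj x y)
    (x : FreePart) : IsMarkerSet N (markerTimes M x) where
  separated i hi j hj hij := by
    by_contra! h
    refine hindep hj hi (fun he => hij (freeShift_left_injective x he.symm))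
      ⟨i - j, sub_ne_zero.2 hij, h, ?_⟩
    rw [freeShift_freeShift, sub_add_cancel]
  syndetic k := by
    by_cases hk : freeShift k x ∈ M
    · exact ⟨k, hk, by simpa⟩
    · obtain ⟨_, hy, j, -, hjN, rfl⟩ := hmax _ hk
      exact ⟨j + k, by rwa [markerTimes, mem_ofPred_eq, ← freeShift_freeShift], by simpa⟩

lemma measurable_sInf_setOf_nat {X : Type*} [MeasurableSpace X] {p : X → ℕ → Prop}
    (hex : ∀ x, ∃ n, p x n) (hp : ∀ n, MeasurableSet {x | p x n}) :
    Measurable fun x => sInf {n | p x n} := by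
  classical
  convert measurable_find hex hp with x
  exact Nat.sInf_def (hex x)

lemma measurable_markerColour {N : ℕ} {M : Set FreePart} (hM : MeasurableSet M)
    (hZ : ∀ x, IsMarkerSet N (markerTimes M x)) (m : ℕ) (ρ : ZMod 3) :
    Measurable fun x => markerColour m ρ (markerTimes M x) 0 := by
  have hprev : Measurable fun x => prevDist (markerTimes M x) 0 :=
    measurable_sInf_setOf_nat (fun x => (hZ x).exists_sub_mem 0)
      fun n => measurable_freeShift _ hM
  have hnext : Measurable fun x => nextDist (markerTimes M x) 0 :=
    measurable_sInf_setOf_nat (fun x => (hZ x).exists_add_mem 0)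
      fun n => (MeasurableSet.const (0 < n)).inter (measurable_freeShift _ hM)
  exact (measurable_of_countable fun pq : ℕ × ℕ =>
    segmentColour (splitPoint m ρ (pq.1 + pq.2)) pq.1).comp (hprev.prodMk hnext)

theorem exists_isBorelColoring_fin_three {A : Finset ℕ} {ρ : ZMod 3} (hρ : ρ ≠ 0)
    (hA : ∀ a ∈ A, (a : ZMod 3) = ρ) : ∃ c : FreePart → Fin 3, IsBorelColoring A c := by
  set m := A.sup id
  obtain ⟨M, hM, hindep, hmax⟩ :=
    (shiftGraph (2 * m + 4)).exists_measurableSet_isIndepSet_forall_exists_adj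
      (finite_neighborSet_shiftGraph _) fun _ => measurableSet_exists_adj_shiftGraph _
  have hZ := isMarkerSet_markerTimes (by omega) hindep hmax
  refine ⟨fun x => markerColour m ρ (markerTimes M x) 0, measurable_markerColour hM hZ m ρ,
    fun x a ha _ => ?_⟩
  have key := (hZ x).markerColour_add_ne le_rfl (A.le_sup (f := id) ha) hρ (hA a ha) 0
  rw [← markerColour_preimage_add, ← markerTimes_freeShift] at key
  exact key.symm

lemma IsBorelColoring.castLE {A : Finset ℕ} {k l : ℕ} {c : FreePart → Fin k}
    (hc : IsBorelColoring A c) (h : k ≤ l) : IsBorelColoring A (Fin.castLE h ∘ c) :=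
  ⟨measurable_from_top.comp hc.1, fun x a ha hx e => hc.2 x a ha hx (Fin.castLE_injective h e)⟩

theorem borelChromatic_eq_three_of_constant_mod_three_general
    (A : Finset ℕ) (hA : A.Nonempty)
    (hmod : (∀ a ∈ A, a % 3 = 1) ∨ (∀ a ∈ A, a % 3 = 2)) :
    borelChromatic A = 3 := by
  obtain ⟨ρ, hρ, hAρ⟩ : ∃ ρ : ZMod 3, ρ ≠ 0 ∧ ∀ a ∈ A, (a : ZMod 3) = ρ := by
    rcases hmod with h | h
    · exact ⟨1, by decide, fun a ha => by rw [← ZMod.natCast_mod, h a ha, Nat.cast_one]⟩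
    · exact ⟨2, by decide, fun a ha => by rw [← ZMod.natCast_mod, h a ha, Nat.cast_ofNat]⟩
  obtain ⟨a, ha⟩ := hA
  have ha0 : a ≠ 0 := fun h => hρ (by simpa [h] using (hAρ a ha).symm)
  obtain ⟨c, hc⟩ := exists_isBorelColoring_fin_three hρ hAρ
  refine le_antisymm (Nat.sInf_le ⟨c, hc⟩) (le_csInf ⟨3, c, hc⟩ ?_)
  rintro k ⟨c', hc'⟩
  by_contra! hk
  exact not_isBorelColoring_fin_two ha ha0 _ (hc'.castLE (by omega : k ≤ 2))

/-- If all `aᵢ ≡ 1 (mod 3)`, or all `aᵢ ≡ 2 (mod 3)`, then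
`χ(a₁,…,aₙ) = 3`. -/
theorem borelChromatic_eq_three_of_constant_mod_three
    (A : Finset ℕ) (hA : A.Nonempty) (hpos : ∀ a ∈ A, 0 < a) (hgcd : A.gcd id = 1)
    (hmod : (∀ a ∈ A, a % 3 = 1) ∨ (∀ a ∈ A, a % 3 = 2)) :
    borelChromatic A = 3 :=
  borelChromatic_eq_three_of_constant_mod_three_general A hA hmod
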